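/- arXiv:1707.07962 — 8 statements merged into one kernel-verified Lean document; each statement's English description precedes it below -/
import Mathlib

section
/- Let P be a monic polynomial of degree k ≥ 1 over ℂ and let r > 0 be a real number such that every complex root z₀ of P satisfies |z₀| < r. Then for every natural number m with m ≤ k − 2, the circle integral (1/(2πi)) ∮_{|z| = r} z^m / P(z) dz equals 0. -/
/-!
By Cauchy's theorem on annuli, `∮ z in C(0, R), z ^ m / P(z)` does not depend on `R ≥ r`. On the
circle of radius `R` it is bounded by `2π · sup ‖z ^ (m + 1) / P(z)‖`, which tends to `0` as
`R → ∞` because `deg P ≥ m + 2`.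
-/

open Polynomial Metric Filter Topology Bornology Real

section

variable {E : Type*} [NormedAddCommGroup E] [NormedSpace ℂ E]

theorem norm_circleIntegral_le_of_norm_sub_smul_le {f : ℂ → E} {c : ℂ} {R C : ℝ} (hR : 0 < R)
    (hf : ∀ z ∈ sphere c R, ‖(z - c) • f z‖ ≤ C) : ‖∮ z in C(c, R), f z‖ ≤ 2 * π * C :=
  calc ‖∮ z in C(c, R), f z‖ ≤ 2 * π * R * (C / R) :=
        circleIntegral.norm_integral_le_of_norm_le_const hR.le fun z hz => by
          have := hf z hz
          rwa [norm_smul, mem_sphere_iff_norm.1 hz, mul_comm, ← le_div_iff₀ hR] at this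
    _ = 2 * π * C := by field_simp

theorem circleIntegral_eq_zero_of_tendsto_sub_smul_cobounded [CompleteSpace E] {f : ℂ → E}
    {c : ℂ} {r : ℝ} (hr : 0 < r) (hd : ∀ z, r ≤ ‖z - c‖ → DifferentiableAt ℂ f z)
    (hlim : Tendsto (fun z => (z - c) • f z) (cobounded ℂ) (𝓝 0)) :
    ∮ z in C(c, r), f z = 0 := by
  have hradius : ∀ R, r ≤ R → ∮ z in C(c, R), f z = ∮ z in C(c, r), f z := fun R hR =>
    Complex.circleIntegral_eq_of_differentiable_on_annulus_off_countable hr hR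
      Set.countable_empty
      (fun z hz => (hd z (by simpa [dist_eq_norm] using hz.2)).continuousAt.continuousWithinAt)
      fun z hz => hd z (le_of_lt (by simpa [dist_eq_norm] using hz.1.2))
  refine norm_le_zero_iff.1 <| le_of_forall_pos_le_add fun ε hε => ?_
  obtain ⟨R₀, -, hR₀⟩ := (hasBasis_cobounded_compl_closedBall c).eventually_iff.1 <|
    hlim.eventually (closedBall_mem_nhds 0 (div_pos hε two_pi_pos))
  set R := max r (R₀ + 1)
  have hbound : ∀ z ∈ sphere c R, ‖(z - c) • f z‖ ≤ ε / (2 * π) := fun z hz => by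
    have : R₀ < dist z c := by rw [mem_sphere.1 hz]; linarith [le_max_right r (R₀ + 1)]
    simpa using hR₀ (by simpa using this)
  calc ‖∮ z in C(c, r), f z‖ = ‖∮ z in C(c, R), f z‖ := by rw [hradius R (le_max_left _ _)]
    _ ≤ 2 * π * (ε / (2 * π)) :=
      norm_circleIntegral_le_of_norm_sub_smul_le (hr.trans_le (le_max_left _ _)) hbound
    _ = 0 + ε := by rw [zero_add]; field_simp

end

theorem stmt3_general (k : ℕ) (P : Polynomial ℂ)
    (hdeg : P.natDegree = k) (r : ℝ) (hr : 0 < r)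
    (hroots : ∀ z₀ : ℂ, P.IsRoot z₀ → ‖z₀‖ < r)
    (m : ℕ) (hm : m + 2 ≤ k) :
    (2 * Real.pi * Complex.I)⁻¹ * (∮ z in C(0, r), z ^ m / P.eval z) = 0 := by
  suffices ∮ z in C(0, r), z ^ m / P.eval z = 0 by rw [this, mul_zero]
  refine circleIntegral_eq_zero_of_tendsto_sub_smul_cobounded hr (fun z hz => ?_) ?_
  · have hP : ¬P.IsRoot z := fun h => (hroots z h).not_ge (by simpa using hz)
    exact (differentiableAt_pow m).div P.differentiableAt hP
  · have hlt : (X ^ (m + 1) : ℂ[X]).degree < P.degree := by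
      rw [degree_X_pow, degree_eq_natDegree (ne_zero_of_natDegree_gt (n := 0) (by omega)), hdeg]
      exact_mod_cast (by omega : m + 1 < k)
    refine ((isLittleO_cobounded_of_degree_lt hlt).tendsto_div_nhds_zero).congr fun z => ?_
    simp only [eval_X_pow, sub_zero, smul_eq_mul]
    ring

/-- Let `P` be a monic polynomial of degree `k ≥ 1` over `ℂ` and `r > 0` a real
number such that every root of `P` has modulus `< r`. Then for every `m ≤ k - 2`,
`(1/(2πi)) ∮_{|z| = r} z^m / P(z) dz = 0`. -/
theorem stmt3 (k : ℕ) (hk : 1 ≤ k) (P : Polynomial ℂ) (hmonic : P.Monic)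
    (hdeg : P.natDegree = k) (r : ℝ) (hr : 0 < r)
    (hroots : ∀ z₀ : ℂ, P.IsRoot z₀ → ‖z₀‖ < r)
    (m : ℕ) (hm : m + 2 ≤ k) :
    (2 * Real.pi * Complex.I)⁻¹ * (∮ z in C(0, r), z ^ m / P.eval z) = 0 :=
  stmt3_general k P hdeg r hr hroots m hm
end

section
/- Let k ≥ 1 be a natural number and define q : ℂ² → ℂ³ by q(u, v) = (u^k, v^k, u·v). Then for all (u, v), (u', v') ∈ ℂ², one has q(u, v) = q(u', v') if and only if there exists ζ ∈ ℂ with ζ^k = 1 such that u' = ζ·u and v' = ζ⁻¹·v. -/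
/-! If `u ≠ 0`, the only candidate is `ζ = u' / u`; the relation `u v = u' v'` then forces
`v' = ζ⁻¹ v`. The case `u = 0`, `v ≠ 0` is the same argument with the two coordinates swapped
(and `ζ` replaced by `ζ⁻¹`), and `u = v = 0` forces `u' = v' = 0`. -/

section CommGroupWithZero

variable {G : Type*} [CommGroupWithZero G] {k : ℕ}

theorem exists_pow_eq_one_of_pow_eq_of_mul_eq_of_ne_zero (hk : k ≠ 0) {u v u' v' : G}
    (hu : u ≠ 0) (hpow : u ^ k = u' ^ k) (hmul : u * v = u' * v') :
    ∃ ζ : G, ζ ^ k = 1 ∧ u' = ζ * u ∧ v' = ζ⁻¹ * v := by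
  have hu' : u' ≠ 0 := ne_zero_pow hk (hpow ▸ pow_ne_zero k hu)
  refine ⟨u' / u, ?_, (div_mul_cancel₀ u' hu).symm, ?_⟩
  · rw [div_pow, ← hpow, div_self (pow_ne_zero k hu)]
  · rw [inv_div, div_mul_eq_mul_div, hmul, mul_div_cancel_left₀ v' hu']

theorem exists_pow_eq_one_of_pow_eq_of_pow_eq_of_mul_eq (hk : k ≠ 0) {u v u' v' : G}
    (hu : u ^ k = u' ^ k) (hv : v ^ k = v' ^ k) (huv : u * v = u' * v') :
    ∃ ζ : G, ζ ^ k = 1 ∧ u' = ζ * u ∧ v' = ζ⁻¹ * v := by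
  by_cases hu0 : u = 0
  · by_cases hv0 : v = 0
    · subst hu0 hv0
      rw [zero_pow hk, eq_comm, pow_eq_zero_iff hk] at hu hv
      exact ⟨1, one_pow k, by simp [hu], by simp [hv]⟩
    · obtain ⟨ζ, hζ, hv', hu'⟩ :=
        exists_pow_eq_one_of_pow_eq_of_mul_eq_of_ne_zero hk hv0 hv (by rw [mul_comm, huv, mul_comm])
      exact ⟨ζ⁻¹, by rw [inv_pow, hζ, inv_one], hu', by rw [inv_inv, hv']⟩
  · exact exists_pow_eq_one_of_pow_eq_of_mul_eq_of_ne_zero hk hu0 hu huv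

end CommGroupWithZero

/-- For `k ≥ 1` and `q : ℂ² → ℂ³`, `q(u, v) = (u^k, v^k, u·v)`, one has
`q(u, v) = q(u', v')` iff there is a `k`-th root of unity `ζ` with
`u' = ζ·u` and `v' = ζ⁻¹·v`. -/
theorem stmt6 (k : ℕ) (hk : 1 ≤ k) (u v u' v' : ℂ) :
    ((u ^ k, v ^ k, u * v) : ℂ × ℂ × ℂ) = (u' ^ k, v' ^ k, u' * v') ↔
      ∃ ζ : ℂ, ζ ^ k = 1 ∧ u' = ζ * u ∧ v' = ζ⁻¹ * v := by
  have hk0 : k ≠ 0 := Nat.one_le_iff_ne_zero.mp hk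
  simp only [Prod.mk.injEq]
  constructor
  · rintro ⟨hu, hv, huv⟩
    exact exists_pow_eq_one_of_pow_eq_of_pow_eq_of_mul_eq hk0 hu hv huv
  · rintro ⟨ζ, hζ, rfl, rfl⟩
    have hζ0 : ζ ≠ 0 := ne_zero_pow hk0 (hζ ▸ one_ne_zero)
    refine ⟨by rw [mul_pow, hζ, one_mul], by rw [mul_pow, inv_pow, hζ, inv_one, one_mul], ?_⟩
    rw [mul_mul_mul_comm, mul_inv_cancel₀ hζ0, one_mul]
end

section
/- Let p ≥ 1 be a natural number. In the ring ℂ⟦u, v⟧ of formal power series in two variables, there do not exist λ, μ, ν ∈ ℂ⟦u, v⟧ and a one-variable polynomial Q ∈ ℂ[T] with constant coefficient 1 such that both of the following identities hold, where Q(uv) denotes Q evaluated at the power series u·v: (i) (p+1)·Q(uv)·u^{p−1}·v^{p} = p·λ·u^{p−1}·v^{p+1} + (p+1)·μ·u^{p}·v^{p} + ν·v, and (ii) p·Q(uv)·u^{p}·v^{p−1} = (p+1)·λ·u^{p}·v^{p} + p·μ·u^{p+1}·v^{p−1} + ν·u. -/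
/-!
Every term of (i) and (ii) is a power series times a monomial `u^a v^b`, so single
coefficients can be read off. Take the coefficient of `u^(p-1) v^p` in (i) and of `u^p v^(p-1)`
in (ii): the `λ`- and `μ`-terms carry too large a monomial to contribute, the left-hand sides give
`(p+1)·Q(0) = p + 1` and `p·Q(0) = p`, and the `ν`-terms both give the coefficient of
`u^(p-1) v^(p-1)` in `ν`. Hence `p + 1 = p`.
-/

open MvPowerSeries Finsupp

section TwoVariables

variable {σ R : Type*} {i j : σ}

theorem Finsupp.single_add_single_le_iff (hij : i ≠ j) {a b c d : ℕ} :
    single i a + single j b ≤ single i c + single j d ↔ a ≤ c ∧ b ≤ d :=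
  ⟨fun h => ⟨by simpa [hij, hij.symm] using h i, by simpa [hij, hij.symm] using h j⟩,
    fun ⟨hac, hbd⟩ => add_le_add (single_le_single.mpr hac) (single_le_single.mpr hbd)⟩

theorem Finsupp.single_add_single_tsub (hij : i ≠ j) (a b c d : ℕ) :
    single i c + single j d - (single i a + single j b) = single i (c - a) + single j (d - b) := by
  classical
  ext k
  simp only [coe_tsub, coe_add, Pi.sub_apply, Pi.add_apply, single_apply]
  split_ifs <;> simp_all

theorem MvPowerSeries.coeff_mul_X_pow_mul_X_pow [CommSemiring R] (hij : i ≠ j)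
    (f : MvPowerSeries σ R) (a b c d : ℕ) :
    coeff (single i c + single j d) (f * X i ^ a * X j ^ b) =
      if a ≤ c ∧ b ≤ d then coeff (single i (c - a) + single j (d - b)) f else 0 := by
  rw [mul_assoc, X_pow_eq, X_pow_eq, monomial_mul_monomial, mul_one, coeff_mul_monomial]
  simp only [single_add_single_le_iff hij, single_add_single_tsub hij, mul_one]

end TwoVariables

theorem MvPowerSeries.constantCoeff_aeval {σ R : Type*} [CommRing R] {x : MvPowerSeries σ R}
    (hx : constantCoeff x = 0) (Q : Polynomial R) :
    constantCoeff (Polynomial.aeval x Q) = Q.coeff 0 := by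
  rw [Polynomial.aeval_def, Polynomial.hom_eval₂, hx, Polynomial.eval₂_at_zero]
  rfl

/-- In `ℂ⟦u, v⟧` (with `u, v` the two variables), for `p ≥ 1` there do not exist
power series `l, m, n` and a one-variable polynomial `Q` with constant
coefficient `1` such that
`(p+1)·Q(uv)·u^(p-1)·v^p = p·l·u^(p-1)·v^(p+1) + (p+1)·m·u^p·v^p + n·v` and
`p·Q(uv)·u^p·v^(p-1) = (p+1)·l·u^p·v^p + p·m·u^(p+1)·v^(p-1) + n·u`. -/
theorem stmt7 (p : ℕ) (hp : 1 ≤ p)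
    (u v : MvPowerSeries (Fin 2) ℂ)
    (hu : u = MvPowerSeries.X 0) (hv : v = MvPowerSeries.X 1) :
    ¬ ∃ (l m n : MvPowerSeries (Fin 2) ℂ) (Q : Polynomial ℂ),
      Q.coeff 0 = 1 ∧
      ((p : MvPowerSeries (Fin 2) ℂ) + 1) * Polynomial.aeval (u * v) Q
          * u ^ (p - 1) * v ^ p =
        (p : MvPowerSeries (Fin 2) ℂ) * l * u ^ (p - 1) * v ^ (p + 1)
          + ((p : MvPowerSeries (Fin 2) ℂ) + 1) * m * u ^ p * v ^ p + n * v ∧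
      (p : MvPowerSeries (Fin 2) ℂ) * Polynomial.aeval (u * v) Q
          * u ^ p * v ^ (p - 1) =
        ((p : MvPowerSeries (Fin 2) ℂ) + 1) * l * u ^ p * v ^ p
          + (p : MvPowerSeries (Fin 2) ℂ) * m * u ^ (p + 1) * v ^ (p - 1) + n * u := by
  rintro ⟨l, m, n, Q, hQ, h₁, h₂⟩
  subst hu hv
  have hQuv : constantCoeff (Polynomial.aeval (X 0 * X 1 : MvPowerSeries (Fin 2) ℂ) Q) = 1 := by
    rw [constantCoeff_aeval (by simp), hQ]
  have hp_pred : ¬ p ≤ p - 1 := by omega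
  have hν₁ : (p + 1 : ℂ) = coeff (single 0 (p - 1) + single 1 (p - 1)) n := by
    have h := congrArg (coeff (single 0 (p - 1) + single 1 p)) h₁
    rw [show n * X 1 = n * X 0 ^ 0 * X 1 ^ 1 by simp] at h
    simp only [map_add, coeff_mul_X_pow_mul_X_pow Fin.zero_ne_one] at h
    simpa [hp, hp_pred, hQuv] using h
  have hν₂ : (p : ℂ) = coeff (single 0 (p - 1) + single 1 (p - 1)) n := by
    have h := congrArg (coeff (single 0 p + single 1 (p - 1))) h₂
    rw [show n * X 0 = n * X 0 ^ 1 * X 1 ^ 0 by simp] at h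
    simp only [map_add, coeff_mul_X_pow_mul_X_pow Fin.zero_ne_one] at h
    simpa [hp, hp_pred, hQuv] using h
  simpa using hν₁.trans hν₂.symm
end

section
/- Work in the ring ℂ⟦x, y, z⟧ of formal power series in three variables and set f = x³ + y³ + z³. There do not exist λ, μ, ν, A, B, C, D ∈ ℂ⟦x, y, z⟧ such that the following three identities hold simultaneously: (i) −x·y² = z·λ + f·A + 3x²·D, (ii) x²·y = z·μ + f·B + 3y²·D, (iii) 0 = z·ν + f·C + 3z²·D. -/
/-!
Combining the first two identities as `y²·(i) − x²·(ii)` and using `x³ + y³ = f − z³` gives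
`f · (x²B − y²A − xy) = z · (y²λ − x²μ − xyz²)`.
The right side has no monomial free of `z`, but on the left the coefficient of `x⁴y` is the
coefficient of `xy` in `x²B − y²A − xy`, which is `−1`.
-/

open MvPowerSeries Finsupp

namespace MvPowerSeries

variable {σ R : Type*} [CommSemiring R]

theorem coeff_X_pow_mul_of_le (p : MvPowerSeries σ R) {i : σ} {k : ℕ} {e : σ →₀ ℕ}
    (h : k ≤ e i) : coeff e (X i ^ k * p) = coeff (e - single i k) p := by
  rw [X_pow_eq, coeff_monomial_mul, if_pos (single_le_iff.mpr h), one_mul]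

theorem coeff_X_pow_mul_of_lt (p : MvPowerSeries σ R) {i : σ} {k : ℕ} {e : σ →₀ ℕ}
    (h : e i < k) : coeff e (X i ^ k * p) = 0 := by
  rw [X_pow_eq, coeff_monomial_mul, if_neg (mt single_le_iff.mp h.not_ge)]

theorem coeff_X_mul_of_eq_zero (p : MvPowerSeries σ R) {i : σ} {e : σ →₀ ℕ}
    (h : e i = 0) : coeff e (X i * p) = 0 := by
  simpa using coeff_X_pow_mul_of_lt p (k := 1) (h ▸ Nat.one_pos)

theorem coeff_xy_eq_zero_of_cubic_mul_eq_z_mul {g h : MvPowerSeries (Fin 3) R}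
    (H : (X 0 ^ 3 + X 1 ^ 3 + X 2 ^ 3) * g = X 2 * h) :
    coeff (single 0 1 + single 1 1) g = 0 := by
  have hexp : (single 0 4 + single 1 1 : Fin 3 →₀ ℕ) - single 0 3 = single 0 1 + single 1 1 := by
    ext i; fin_cases i <;> simp
  have := congrArg (coeff (single 0 4 + single 1 1)) H
  rwa [coeff_X_mul_of_eq_zero _ (by simp), add_mul, add_mul, map_add, map_add,
    coeff_X_pow_mul_of_le (i := 0) _ (by simp), coeff_X_pow_mul_of_lt (i := 1) _ (by simp),
    coeff_X_pow_mul_of_lt (i := 2) _ (by simp), hexp, add_zero, add_zero] at this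

end MvPowerSeries

/-- In `ℂ⟦x, y, z⟧` with `f = x³ + y³ + z³`, there do not exist power series
`l, m, n, A, B, C, D` with `−x·y² = z·l + f·A + 3x²·D`,
`x²·y = z·m + f·B + 3y²·D`, and `0 = z·n + f·C + 3z²·D`. -/
theorem stmt9 (x y z f : MvPowerSeries (Fin 3) ℂ)
    (hx : x = MvPowerSeries.X 0) (hy : y = MvPowerSeries.X 1)
    (hz : z = MvPowerSeries.X 2)
    (hf : f = x ^ 3 + y ^ 3 + z ^ 3) :
    ¬ ∃ l m n A B C D : MvPowerSeries (Fin 3) ℂ,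
      -x * y ^ 2 = z * l + f * A + 3 * x ^ 2 * D ∧
      x ^ 2 * y = z * m + f * B + 3 * y ^ 2 * D ∧
      (0 : MvPowerSeries (Fin 3) ℂ) = z * n + f * C + 3 * z ^ 2 * D := by
  rintro ⟨l, m, n, A, B, C, D, h₁, h₂, -⟩
  subst hx hy hz hf
  have hcomb : (X 0 ^ 3 + X 1 ^ 3 + X 2 ^ 3) * (X 0 ^ 2 * B - X 1 ^ 2 * A - X 0 * X 1) =
      X 2 * (X 1 ^ 2 * l - X 0 ^ 2 * m - X 0 * X 1 * X 2 ^ 2) := by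
    linear_combination (X 1 ^ 2 : MvPowerSeries (Fin 3) ℂ) * h₁ - X 0 ^ 2 * h₂
  have hxy := coeff_xy_eq_zero_of_cubic_mul_eq_z_mul hcomb
  rw [map_sub, map_sub, coeff_X_pow_mul_of_lt _ (by simp), coeff_X_pow_mul_of_lt _ (by simp),
    X, X, monomial_mul_monomial, coeff_monomial_same] at hxy
  norm_num at hxy
end

section
/- Work in the ring ℂ⟦x, y, z, t⟧ of formal power series in four variables and set f = x·y·z − t³. There do not exist λ, μ, ν, θ, A, B, C, E, g ∈ ℂ⟦x, y, z, t⟧ such that the following four identities hold simultaneously: (i) y·z = t·λ + f·A + g·(y·z), (ii) 0 = t·μ + f·B + g·(x·z), (iii) 0 = t·ν + f·C + g·(x·y), (iv) 0 = t·θ + f·E − 3·g·t². -/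
/-!
Rearranged, identity (i) reads
`y·z·(1 − g) = t·(l − t²·A) + x·(y·z·A)` and (ii) reads `x·z·g = t·(t²·B − m) + y·(−x·z·B)`.
Comparing the coefficients of the monomials `y·z` and `x·z` gives `g(0) = 1` and `g(0) = 0`.
-/

open MvPowerSeries Finsupp

namespace MvPowerSeries

variable {σ R : Type*} [CommSemiring R]

theorem coeff_X_mul_eq_zero {i : σ} {e : σ →₀ ℕ} (he : e i = 0) (φ : MvPowerSeries σ R) :
    coeff e (X i * φ) = 0 := by
  rw [X_def, coeff_monomial_mul, if_neg]
  intro hle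
  simpa [he] using hle i

theorem coeff_X_mul_X_mul {i j : σ} (φ : MvPowerSeries σ R) :
    coeff (single i 1 + single j 1) (X i * X j * φ) = constantCoeff φ := by
  rw [X_def, X_def, monomial_mul_monomial, one_mul, coeff_monomial_mul, if_pos le_rfl,
    tsub_self, one_mul, coeff_zero_eq_constantCoeff_apply]

theorem constantCoeff_eq_zero_of_X_mul_X_mul_eq {i j k l : σ}
    (hki : k ≠ i) (hkj : k ≠ j) (hli : l ≠ i) (hlj : l ≠ j) {a b c : MvPowerSeries σ R}
    (h : X i * X j * a = X k * b + X l * c) : constantCoeff a = 0 := by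
  have hvanish : ∀ {s : σ}, s ≠ i → s ≠ j → (single i 1 + single j 1 : σ →₀ ℕ) s = 0 := by
    intro s hsi hsj
    rw [Finsupp.add_apply, single_eq_of_ne hsi, single_eq_of_ne hsj, add_zero]
  have := congrArg (coeff (single i 1 + single j 1)) h
  rwa [coeff_X_mul_X_mul, map_add, coeff_X_mul_eq_zero (hvanish hki hkj),
    coeff_X_mul_eq_zero (hvanish hli hlj), add_zero] at this

end MvPowerSeries

/-- In `ℂ⟦x, y, z, t⟧` with `f = x·y·z − t³`, there do not exist power series
`l, m, n, θ, A, B, C, E, g` with `y·z = t·l + f·A + g·(y·z)`,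
`0 = t·m + f·B + g·(x·z)`, `0 = t·n + f·C + g·(x·y)`, and
`0 = t·θ + f·E − 3·g·t²`. -/
theorem stmt10 (x y z t f : MvPowerSeries (Fin 4) ℂ)
    (hx : x = MvPowerSeries.X 0) (hy : y = MvPowerSeries.X 1)
    (hz : z = MvPowerSeries.X 2) (ht : t = MvPowerSeries.X 3)
    (hf : f = x * y * z - t ^ 3) :
    ¬ ∃ l m n θ A B C E g : MvPowerSeries (Fin 4) ℂ,
      y * z = t * l + f * A + g * (y * z) ∧
      (0 : MvPowerSeries (Fin 4) ℂ) = t * m + f * B + g * (x * z) ∧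
      (0 : MvPowerSeries (Fin 4) ℂ) = t * n + f * C + g * (x * y) ∧
      (0 : MvPowerSeries (Fin 4) ℂ) = t * θ + f * E - 3 * g * t ^ 2 := by
  subst hx hy hz ht hf
  rintro ⟨l, m, -, -, A, B, -, -, g, h1, h2, -, -⟩
  have hyz : X 1 * X 2 * (1 - g) = X 3 * (l - X 3 ^ 2 * A) + X 0 * (X 1 * X 2 * A) := by
    linear_combination h1
  have hxz : X 0 * X 2 * g = X 3 * (X 3 ^ 2 * B - m) + X 1 * -(X 0 * X 2 * B) := by
    linear_combination -h2
  have hg_one := constantCoeff_eq_zero_of_X_mul_X_mul_eq (by decide) (by decide) (by decide)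
    (by decide) hyz
  have hg_zero := constantCoeff_eq_zero_of_X_mul_X_mul_eq (by decide) (by decide) (by decide)
    (by decide) hxz
  simp [hg_zero] at hg_one
end

section
/- Work in the ring ℂ⟦x, y, z⟧ of formal power series in three variables and set f = x³ + y³ + z³. There do not exist λ, μ, ν, A, B, C, a, b, c ∈ ℂ⟦x, y, z⟧ such that the following three identities hold simultaneously: (i) x·y = z·λ + f·A + 3x²·b − 3y²·a, (ii) 0 = z·μ + f·B + 3y²·c − 3z²·b, (iii) 0 = z·ν + f·C + 3z²·a − 3x²·c. -/
/-! Every term on the right of (i) is a multiple of `z`, `x²` or `y²` (note `f ∈ (x², y², z)`),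
so its coefficient at the monomial `x·y` vanishes, whereas on the left that coefficient is `1`. -/

open MvPowerSeries Finsupp

theorem MvPowerSeries.coeff_X_pow_mul_of_lt_s11 {σ R : Type*} [CommSemiring R] {d : σ →₀ ℕ} {i : σ}
    {k : ℕ} (h : d i < k) (g : MvPowerSeries σ R) : coeff d (X i ^ k * g) = 0 := by
  rw [X_pow_eq, coeff_monomial_mul, if_neg fun hle ↦ (hle i).not_gt (by simpa using h)]

theorem MvPowerSeries.coeff_X_mul_of_eq_zero_s11 {σ R : Type*} [CommSemiring R] {d : σ →₀ ℕ} {i : σ}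
    (h : d i = 0) (g : MvPowerSeries σ R) : coeff d (X i * g) = 0 := by
  simpa using coeff_X_pow_mul_of_lt_s11 (k := 1) (by omega) g

/-- In `ℂ⟦x, y, z⟧` with `f = x³ + y³ + z³`, there do not exist power series
`l, m, n, A, B, C, a, b, c` with `x·y = z·l + f·A + 3x²·b − 3y²·a`,
`0 = z·m + f·B + 3y²·c − 3z²·b`, and `0 = z·n + f·C + 3z²·a − 3x²·c`. -/
theorem stmt11 (x y z f : MvPowerSeries (Fin 3) ℂ)
    (hx : x = MvPowerSeries.X 0) (hy : y = MvPowerSeries.X 1)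
    (hz : z = MvPowerSeries.X 2)
    (hf : f = x ^ 3 + y ^ 3 + z ^ 3) :
    ¬ ∃ l m n A B C a b c : MvPowerSeries (Fin 3) ℂ,
      x * y = z * l + f * A + 3 * x ^ 2 * b - 3 * y ^ 2 * a ∧
      (0 : MvPowerSeries (Fin 3) ℂ) = z * m + f * B + 3 * y ^ 2 * c - 3 * z ^ 2 * b ∧
      (0 : MvPowerSeries (Fin 3) ℂ) = z * n + f * C + 3 * z ^ 2 * a - 3 * x ^ 2 * c := by
  rintro ⟨l, -, -, A, -, -, a, b, -, h, -, -⟩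
  subst hx hy hz hf
  have coeff_xy : coeff (single 0 1 + single 1 1) (X 0 * X 1 : MvPowerSeries (Fin 3) ℂ) = 1 := by
    rw [X_def, X_def, monomial_mul_monomial, one_mul, coeff_monomial_same]
  have key := congrArg (coeff (single 0 1 + single 1 1)) h
  simp [coeff_xy, add_mul, mul_comm (3 : MvPowerSeries (Fin 3) ℂ), mul_assoc,
    coeff_X_pow_mul_of_lt_s11, coeff_X_mul_of_eq_zero_s11] at key
end

section
/- Let a, b, c be polynomials in ℂ[x₁, x₂, x₃]. Then a·x₃ + b·x₁ + c·x₂ lies in the ideal generated by x₁² + x₂² + x₃² if and only if there exist polynomials g, λ, λ', μ ∈ ℂ[x₁, x₂, x₃] such that a = g·x₃ + λ·x₁ + μ·x₂, b = g·x₁ + λ'·x₂ − λ·x₃, and c = g·x₂ − λ'·x₁ − μ·x₃. -/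
/-!
Substituting `xₖ = 0` reduces a linear relation among three variables to one among two, and
`xᵢ ∣ p - p|_{xᵢ = 0}` lets us lift the solution back; together this shows that the syzygies of
`x₁, x₂, x₃` are generated by the Koszul relations. Since `x₃·x₃ + x₁·x₁ + x₂·x₂` is the quadric,
`a·x₃ + b·x₁ + c·x₂ = g·(x₁² + x₂² + x₃²)` means that `(a - g x₃, b - g x₁, c - g x₂)` is a syzygy.
-/

open MvPolynomial Function

namespace MvPolynomial

variable {R σ : Type*} [CommRing R]

theorem X_dvd_sub_aeval_update_zero [DecidableEq σ] (i : σ) (p : MvPolynomial σ R) :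
    X i ∣ p - aeval (update X i 0) p := by
  induction p using MvPolynomial.induction_on with
  | C r => simp
  | add p q hp hq => simpa [add_sub_add_comm] using dvd_add hp hq
  | mul_X p j hp =>
    by_cases hj : j = i
    · subst hj
      simp
    · have hpX : p * X j - aeval (update X i 0) (p * X j) =
          (p - aeval (update X i 0) p) * X j := by
        simp [update_of_ne hj, sub_mul]
      exact hpX ▸ hp.mul_right _

theorem exists_eq_of_mul_X_add_mul_X_eq_zero {i j : σ} (hij : i ≠ j) {b c : MvPolynomial σ R}
    (h : b * X i + c * X j = 0) : ∃ d, b = d * X j ∧ c = -(d * X i) := by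
  classical
  have hc : aeval (R := R) (update X i (0 : MvPolynomial σ R)) c = 0 := by
    apply (isRegular_X (n := j)).right
    simpa [update_of_ne hij.symm] using
      congrArg (aeval (R := R) (update X i (0 : MvPolynomial σ R))) h
  obtain ⟨e, he⟩ : X i ∣ c := by
    simpa only [hc, sub_zero] using X_dvd_sub_aeval_update_zero i c
  refine ⟨-e, (isRegular_X (n := i)).right ?_, by rw [he]; ring⟩
  linear_combination h - X j * he

theorem exists_koszul_of_syzygy {i j k : σ} (hij : i ≠ j) (hik : i ≠ k) (hjk : j ≠ k)
    {a b c : MvPolynomial σ R} (h : a * X k + b * X i + c * X j = 0) :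
    ∃ l l' m, a = l * X i + m * X j ∧ b = l' * X j - l * X k ∧ c = -(l' * X i) - m * X k := by
  classical
  obtain ⟨d, hbd, hcd⟩ : ∃ d, aeval (R := R) (update X k (0 : MvPolynomial σ R)) b = d * X j ∧
      aeval (R := R) (update X k (0 : MvPolynomial σ R)) c = -(d * X i) := by
    apply exists_eq_of_mul_X_add_mul_X_eq_zero hij
    simpa [update_of_ne hik, update_of_ne hjk] using
      congrArg (aeval (R := R) (update X k (0 : MvPolynomial σ R))) h
  obtain ⟨B, hB⟩ := X_dvd_sub_aeval_update_zero k b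
  obtain ⟨C, hC⟩ := X_dvd_sub_aeval_update_zero k c
  have ha : a = -B * X i + -C * X j := by
    apply (isRegular_X (n := k)).left
    linear_combination h - X i * (hB + hbd) - X j * (hC + hcd)
  exact ⟨-B, d, -C, ha, by linear_combination hB + hbd, by linear_combination hC + hcd⟩

end MvPolynomial

/-- In `ℂ[x₁, x₂, x₃]` (with `x₁ = X 0`, `x₂ = X 1`, `x₃ = X 2`),
`a·x₃ + b·x₁ + c·x₂` lies in the ideal generated by `x₁² + x₂² + x₃²` iff there
exist `g, l, l', m` with `a = g·x₃ + l·x₁ + m·x₂`, `b = g·x₁ + l'·x₂ − l·x₃`,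
and `c = g·x₂ − l'·x₁ − m·x₃`. -/
theorem stmt12 (a b c : MvPolynomial (Fin 3) ℂ) :
    a * MvPolynomial.X 2 + b * MvPolynomial.X 0 + c * MvPolynomial.X 1 ∈
      Ideal.span {(MvPolynomial.X 0 ^ 2 + MvPolynomial.X 1 ^ 2 +
        MvPolynomial.X 2 ^ 2 : MvPolynomial (Fin 3) ℂ)} ↔
    ∃ g l l' m : MvPolynomial (Fin 3) ℂ,
      a = g * MvPolynomial.X 2 + l * MvPolynomial.X 0 + m * MvPolynomial.X 1 ∧
      b = g * MvPolynomial.X 0 + l' * MvPolynomial.X 1 - l * MvPolynomial.X 2 ∧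
      c = g * MvPolynomial.X 1 - l' * MvPolynomial.X 0 - m * MvPolynomial.X 2 := by
  rw [Ideal.mem_span_singleton']
  constructor
  · rintro ⟨g, hg⟩
    obtain ⟨l, l', m, ha, hb, hc⟩ := exists_koszul_of_syzygy (i := 0) (j := 1) (k := 2)
      (by decide) (by decide) (by decide) (a := a - g * X 2) (b := b - g * X 0)
      (c := c - g * X 1) (by linear_combination -hg)
    exact ⟨g, l, l', m, by linear_combination ha, by linear_combination hb,
      by linear_combination hc⟩
  · rintro ⟨g, l, l', m, rfl, rfl, rfl⟩
    exact ⟨g, by ring⟩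
end

section
/- Let k ≥ 2 be a natural number. In the polynomial ring ℂ[x, y, z, X, Y, Z] in six variables, the polynomial (y·X − x·Y)² − k²·z^{2k−2}·Z² + 4·z^{k}·X·Y belongs to the ideal generated by x·y − z^{k} and y·X + x·Y − k·z^{k−1}·Z. -/
/-!
Put `w = k·z^(k−1)·dz`, so that `k²·z^(2k−2)·dz² = w²`. Since
`(y·dx − x·dy)² = (y·dx + x·dy)² − 4·x·y·dx·dy`, the polynomial equals
`(y·dx + x·dy − w)·(y·dx + x·dy + w) − 4·dx·dy·(x·y − z^k)`.
-/

theorem natCast_sq_mul_pow_two_mul_sub_two {R : Type*} [CommSemiring R] (k : ℕ) (z : R) :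
    (k : R) ^ 2 * z ^ (2 * k - 2) = ((k : R) * z ^ (k - 1)) ^ 2 := by
  cases k with
  | zero => simp
  | succ m =>
    rw [show 2 * (m + 1) - 2 = 2 * m by omega, Nat.add_sub_cancel]
    ring

theorem sq_sub_sq_add_four_mul_mem_span_pair {R : Type*} [CommRing R] (x y t X Y w : R) :
    (y * X - x * Y) ^ 2 - w ^ 2 + 4 * t * X * Y ∈
      Ideal.span {x * y - t, y * X + x * Y - w} :=
  Ideal.mem_span_pair.2 ⟨-(4 * X * Y), y * X + x * Y + w, by ring⟩

theorem stmt13_general (k : ℕ)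
    (x y z dx dy dz : MvPolynomial (Fin 6) ℂ) :
    (y * dx - x * dy) ^ 2 - (k : MvPolynomial (Fin 6) ℂ) ^ 2 * z ^ (2 * k - 2) * dz ^ 2
        + 4 * z ^ k * dx * dy ∈
      Ideal.span {x * y - z ^ k,
        y * dx + x * dy - (k : MvPolynomial (Fin 6) ℂ) * z ^ (k - 1) * dz} := by
  rw [natCast_sq_mul_pow_two_mul_sub_two, ← mul_pow]
  exact sq_sub_sq_add_four_mul_mem_span_pair x y (z ^ k) dx dy _

/-- For `k ≥ 2`, in `ℂ[x, y, z, dx, dy, dz]` (six variables), the polynomial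
`(y·dx − x·dy)² − k²·z^(2k−2)·dz² + 4·z^k·dx·dy` belongs to the ideal generated
by `x·y − z^k` and `y·dx + x·dy − k·z^(k−1)·dz`. -/
theorem stmt13 (k : ℕ) (hk : 2 ≤ k)
    (x y z dx dy dz : MvPolynomial (Fin 6) ℂ)
    (hx : x = MvPolynomial.X 0) (hy : y = MvPolynomial.X 1)
    (hz : z = MvPolynomial.X 2) (hdx : dx = MvPolynomial.X 3)
    (hdy : dy = MvPolynomial.X 4) (hdz : dz = MvPolynomial.X 5) :
    (y * dx - x * dy) ^ 2 - (k : MvPolynomial (Fin 6) ℂ) ^ 2 * z ^ (2 * k - 2) * dz ^ 2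
        + 4 * z ^ k * dx * dy ∈
      Ideal.span {x * y - z ^ k,
        y * dx + x * dy - (k : MvPolynomial (Fin 6) ℂ) * z ^ (k - 1) * dz} :=
  stmt13_general k x y z dx dy dz
end
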